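/- arXiv:2306.08854 — 2 statements merged into one kernel-verified Lean document; each statement's English description precedes it below -/
import Mathlib

section
/- (Poincaré separation theorem) Let A be an N×N real symmetric matrix and C an n×N matrix with C Cᵀ = I_n (semi-orthogonal, n ≤ N). Let λ_1 ≥ λ_2 ≥ ... ≥ λ_N be the eigenvalues of A and μ_1 ≥ ... ≥ μ_n the eigenvalues of C A Cᵀ (both in descending order). Then for every i ∈ {1,...,n}, λ_i ≥ μ_i ≥ λ_{N−n+i}. -/
open Matrix Finset Module

lemma sum_dotProduct' {m : ℕ} {k : Type*} (s : Finset k) (v : k → Fin m → ℝ) (w : Fin m → ℝ) :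
    (∑ j ∈ s, v j) ⬝ᵥ w = ∑ j ∈ s, v j ⬝ᵥ w := by
  simp only [dotProduct, Finset.sum_apply, Finset.sum_mul]
  exact Finset.sum_comm

lemma dotProduct_sum' {m : ℕ} {k : Type*} (s : Finset k) (w : Fin m → ℝ) (v : k → Fin m → ℝ) :
    w ⬝ᵥ (∑ j ∈ s, v j) = ∑ j ∈ s, w ⬝ᵥ v j := by
  simp only [dotProduct, Finset.sum_apply, Finset.mul_sum]
  exact Finset.sum_comm


lemma dot_smul_right' {m : ℕ} (v : Fin m → ℝ) (a : ℝ) (w : EuclideanSpace ℝ (Fin m)) :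
    v ⬝ᵥ ((a • w : EuclideanSpace ℝ (Fin m)) : Fin m → ℝ) = a * (v ⬝ᵥ (w : Fin m → ℝ)) := by
  simp only [dotProduct, PiLp.smul_apply, smul_eq_mul, Finset.mul_sum]
  exact Finset.sum_congr rfl (fun i _ => by ring)

/-- Rayleigh quotient bound on a span of eigenvectors. -/
lemma rayleigh_span_le {m : ℕ} (M : Matrix (Fin m) (Fin m) ℝ)
    {b : Fin m → EuclideanSpace ℝ (Fin m)} (hb : Orthonormal ℝ b)
    {f : Fin m → ℝ} (hMb : ∀ j, M *ᵥ (b j : Fin m → ℝ) = f j • (b j : Fin m → ℝ))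
    (s : Finset (Fin m)) (t : ℝ) (ht : ∀ j ∈ s, f j ≤ t)
    (x : EuclideanSpace ℝ (Fin m)) (hx : x ∈ Submodule.span ℝ (b '' s)) :
    (x : Fin m → ℝ) ⬝ᵥ (M *ᵥ (x : Fin m → ℝ)) ≤ t * ((x : Fin m → ℝ) ⬝ᵥ (x : Fin m → ℝ)) := by
  classical
  have hbinj : Function.Injective b := hb.linearIndependent.injective
  have hbd : ∀ j k, ((b j : Fin m → ℝ) ⬝ᵥ (b k : Fin m → ℝ)) = if j = k then 1 else 0 := by
    intro j k
    have := orthonormal_iff_ite.mp hb j k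
    rw [PiLp.inner_apply] at this
    simpa [dotProduct, RCLike.inner_apply, mul_comm] using this
  rw [show b '' (s : Set (Fin m)) = ((s.image b : Finset _) : Set _) by simp] at hx
  obtain ⟨g, -, hg⟩ := Submodule.mem_span_finset.mp hx
  rw [Finset.sum_image (fun a _ c _ h => hbinj h)] at hg
  set c : Fin m → ℝ := fun j => g (b j) with hc
  have hxe : (x : Fin m → ℝ) = ∑ j ∈ s, c j • (b j : Fin m → ℝ) := by
    rw [← hg]
    simp [c]
  have hMx : M *ᵥ (x : Fin m → ℝ) = ∑ j ∈ s, (c j * f j) • (b j : Fin m → ℝ) := by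
    rw [hxe]
    rw [show M *ᵥ (∑ j ∈ s, c j • (b j : Fin m → ℝ)) = ∑ j ∈ s, c j • (M *ᵥ (b j : Fin m → ℝ)) by
      simp only [← Matrix.mulVecLin_apply, map_sum, LinearMap.map_smul]]
    simp [hMb, smul_smul]
  have h1 : (x : Fin m → ℝ) ⬝ᵥ (M *ᵥ (x : Fin m → ℝ)) = ∑ j ∈ s, f j * c j ^ 2 := by
    rw [hMx, hxe, sum_dotProduct']
    refine Finset.sum_congr rfl fun j hj => ?_
    rw [smul_dotProduct, dotProduct_sum']
    simp only [dot_smul_right', dotProduct_smul, hbd, smul_eq_mul, mul_ite, mul_one, mul_zero,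
      Finset.sum_ite_eq, hj, if_pos]
    ring
  have h2 : (x : Fin m → ℝ) ⬝ᵥ (x : Fin m → ℝ) = ∑ j ∈ s, c j ^ 2 := by
    rw [hxe, sum_dotProduct']
    refine Finset.sum_congr rfl fun j hj => ?_
    rw [smul_dotProduct, dotProduct_sum']
    simp only [dot_smul_right', dotProduct_smul, hbd, smul_eq_mul, mul_ite, mul_one, mul_zero,
      Finset.sum_ite_eq, hj, if_pos]
    ring
  rw [h1, h2, Finset.mul_sum]
  refine Finset.sum_le_sum fun j hj => ?_
  have := ht j hj
  nlinarith [sq_nonneg (c j)]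


lemma exists_common {N n : ℕ}
    (C : Matrix (Fin n) (Fin N) ℝ) (hC : C * Cᵀ = 1)
    {u : Fin n → EuclideanSpace ℝ (Fin n)} (hu : Orthonormal ℝ u)
    {w : Fin N → EuclideanSpace ℝ (Fin N)} (hw : Orthonormal ℝ w)
    (s : Finset (Fin n)) (r : Finset (Fin N)) (hcard : N < s.card + r.card) :
    ∃ (y : EuclideanSpace ℝ (Fin n)) (x : EuclideanSpace ℝ (Fin N)),
      y ≠ 0 ∧ y ∈ Submodule.span ℝ (u '' s) ∧ x ∈ Submodule.span ℝ (w '' r) ∧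
      (x : Fin N → ℝ) = Cᵀ *ᵥ (y : Fin n → ℝ) := by
  classical
  set L : EuclideanSpace ℝ (Fin n) →ₗ[ℝ] EuclideanSpace ℝ (Fin N) :=
    (WithLp.linearEquiv 2 ℝ (Fin N → ℝ)).symm.toLinearMap ∘ₗ Cᵀ.mulVecLin ∘ₗ
      (WithLp.linearEquiv 2 ℝ (Fin n → ℝ)).toLinearMap with hL
  have hLapp : ∀ y : EuclideanSpace ℝ (Fin n), (L y : Fin N → ℝ) = Cᵀ *ᵥ (y : Fin n → ℝ) :=
    fun y => rfl
  have hLinj : Function.Injective L := by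
    intro y z h
    have h2 : Cᵀ *ᵥ (y : Fin n → ℝ) = Cᵀ *ᵥ (z : Fin n → ℝ) := by
      rw [← hLapp, ← hLapp, h]
    have h3 := congrArg (fun v => C *ᵥ v) h2
    simp only [Matrix.mulVec_mulVec, hC, Matrix.one_mulVec] at h3
    exact WithLp.ofLp_injective 2 h3
  set P : Submodule ℝ (EuclideanSpace ℝ (Fin N)) := (Submodule.span ℝ (u '' s)).map L with hP
  set Q : Submodule ℝ (EuclideanSpace ℝ (Fin N)) := Submodule.span ℝ (w '' r) with hQ
  have hPrank : finrank ℝ P = s.card := by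
    have h1 : LinearIndependent ℝ (fun j : ↥s => L (u j)) :=
      ((hu.linearIndependent).map' L (LinearMap.ker_eq_bot.mpr hLinj)).comp _ Subtype.val_injective
    have h2 : P = Submodule.span ℝ (Set.range fun j : ↥s => L (u j)) := by
      rw [hP, Submodule.map_span]
      congr 1
      rw [show (fun j : ↥s => L (u j)) = L ∘ u ∘ Subtype.val from rfl, Set.range_comp,
        Set.range_comp, Subtype.range_coe]
    rw [h2, finrank_span_eq_card h1, Fintype.card_coe]
  have hQrank : finrank ℝ Q = r.card := by
    have h1 : LinearIndependent ℝ (fun j : ↥r => w j) :=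
      (hw.linearIndependent).comp _ Subtype.val_injective
    have h2 : Q = Submodule.span ℝ (Set.range fun j : ↥r => w j) := by
      rw [hQ]
      congr 1
      rw [show (fun j : ↥r => w j) = w ∘ Subtype.val from rfl, Set.range_comp, Subtype.range_coe]
    rw [h2, finrank_span_eq_card h1, Fintype.card_coe]
  have hsum := Submodule.finrank_sup_add_finrank_inf_eq P Q
  have hsup : finrank ℝ ↥(P ⊔ Q) ≤ N := by
    have := Submodule.finrank_le (P ⊔ Q)
    rwa [finrank_euclideanSpace_fin] at this
  have hpos : 0 < finrank ℝ ↥(P ⊓ Q) := by omega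
  have : Nontrivial ↥(P ⊓ Q) := finrank_pos_iff.mp hpos
  obtain ⟨x, hxmem, hx0⟩ := Submodule.exists_mem_ne_zero_of_ne_bot
    (by intro hbot; rw [hbot] at this; exact not_nontrivial _ this : P ⊓ Q ≠ ⊥)
  obtain ⟨y, hy, hLy⟩ := Submodule.mem_map.mp hxmem.1
  refine ⟨y, x, ?_, hy, hxmem.2, ?_⟩
  · rintro rfl
    rw [map_zero] at hLy
    exact hx0 hLy.symm
  · rw [← hLy, hLapp]

/-- Poincaré separation theorem. -/
theorem stmt1 {N n : ℕ} (hn : n ≤ N)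
    (A : Matrix (Fin N) (Fin N) ℝ) (hA : A.IsHermitian)
    (C : Matrix (Fin n) (Fin N) ℝ) (hC : C * Cᵀ = 1)
    (hB : (C * A * Cᵀ).IsHermitian)
    (lam : Fin N → ℝ) (mu : Fin n → ℝ)
    (hlam_mono : Antitone lam) (hmu_mono : Antitone mu)
    (hlam : ∃ σ : Equiv.Perm (Fin N), lam = hA.eigenvalues ∘ σ)
    (hmu : ∃ σ : Equiv.Perm (Fin n), mu = hB.eigenvalues ∘ σ) :
    ∀ i : Fin n, mu i ≤ lam ⟨i.val, lt_of_lt_of_le i.isLt hn⟩ ∧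
      lam ⟨N - n + i.val, by have := i.isLt; omega⟩ ≤ mu i := by
  classical
  obtain ⟨σ, hσ⟩ := hlam
  obtain ⟨τ, hτ⟩ := hmu
  set w : Fin N → EuclideanSpace ℝ (Fin N) := fun j => hA.eigenvectorBasis (σ j) with hwdef
  set u : Fin n → EuclideanSpace ℝ (Fin n) := fun j => hB.eigenvectorBasis (τ j) with hudef
  have hw : Orthonormal ℝ w := hA.eigenvectorBasis.orthonormal.comp σ σ.injective
  have hu : Orthonormal ℝ u := hB.eigenvectorBasis.orthonormal.comp τ τ.injective
  have hweig : ∀ j, A *ᵥ (w j : Fin N → ℝ) = lam j • (w j : Fin N → ℝ) := by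
    intro j
    rw [hσ]
    exact hA.mulVec_eigenvectorBasis (σ j)
  have hueig : ∀ j, (C * A * Cᵀ) *ᵥ (u j : Fin n → ℝ) = mu j • (u j : Fin n → ℝ) := by
    intro j
    rw [hτ]
    exact hB.mulVec_eigenvectorBasis (τ j)
  have hnegweig : ∀ j, (-A) *ᵥ (w j : Fin N → ℝ) = (-lam j) • (w j : Fin N → ℝ) := by
    intro j; rw [Matrix.neg_mulVec, hweig, neg_smul]
  have hnegueig : ∀ j, (-(C * A * Cᵀ)) *ᵥ (u j : Fin n → ℝ) = (-mu j) • (u j : Fin n → ℝ) := by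
    intro j; rw [Matrix.neg_mulVec, hueig, neg_smul]
  have bridge : ∀ (M : Matrix (Fin N) (Fin N) ℝ) (y : Fin n → ℝ),
      (Cᵀ *ᵥ y) ⬝ᵥ (M *ᵥ (Cᵀ *ᵥ y)) = y ⬝ᵥ ((C * M * Cᵀ) *ᵥ y) := by
    intro M y
    rw [Matrix.mulVec_mulVec, Matrix.mulVec_transpose, ← Matrix.dotProduct_mulVec,
      Matrix.mulVec_mulVec, ← Matrix.mul_assoc]
  have bridge1 : ∀ (y : Fin n → ℝ), (Cᵀ *ᵥ y) ⬝ᵥ (Cᵀ *ᵥ y) = y ⬝ᵥ y := by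
    intro y
    have := bridge 1 y
    simpa [Matrix.one_mulVec, Matrix.mul_one, hC] using this
  intro i
  have hiN : (i : ℕ) < N := lt_of_lt_of_le i.isLt hn
  constructor
  · -- mu i ≤ lam i
    set i1 : Fin N := ⟨i.val, hiN⟩ with hi1
    have hcard : N < (Finset.Iic i).card + (Finset.Ici i1).card := by
      rw [Fin.card_Iic, Fin.card_Ici]
      simp only [hi1]
      omega
    obtain ⟨y, x, hy0, hyU, hxW, hxy⟩ := exists_common C hC hu hw (Finset.Iic i)
      (Finset.Ici i1) hcard
    have hupper := rayleigh_span_le A hw hweig (Finset.Ici i1) (lam i1)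
      (fun j hj => hlam_mono (Finset.mem_Ici.mp hj)) x hxW
    have hlower := rayleigh_span_le (-(C * A * Cᵀ)) hu hnegueig (Finset.Iic i) (-(mu i))
      (fun j hj => neg_le_neg (hmu_mono (Finset.mem_Iic.mp hj))) y hyU
    rw [Matrix.neg_mulVec, dotProduct_neg, neg_le, ← neg_mul, neg_neg] at hlower
    have hq : (0:ℝ) < (y : Fin n → ℝ) ⬝ᵥ (y : Fin n → ℝ) := by
      rcases lt_or_eq_of_le (Finset.sum_nonneg fun k _ =>
        mul_self_nonneg ((y : Fin n → ℝ) k)) with h | h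
      · exact h
      · exact absurd (dotProduct_self_eq_zero.mp h.symm) (by simpa using hy0)
    have heq1 : (x : Fin N → ℝ) ⬝ᵥ (A *ᵥ (x : Fin N → ℝ)) =
        (y : Fin n → ℝ) ⬝ᵥ ((C * A * Cᵀ) *ᵥ (y : Fin n → ℝ)) := by
      rw [hxy]; exact bridge A y
    have heq2 : (x : Fin N → ℝ) ⬝ᵥ (x : Fin N → ℝ) = (y : Fin n → ℝ) ⬝ᵥ (y : Fin n → ℝ) := by
      rw [hxy]; exact bridge1 y
    rw [heq1, heq2] at hupper
    have : mu i * ((y : Fin n → ℝ) ⬝ᵥ (y : Fin n → ℝ)) ≤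
        lam i1 * ((y : Fin n → ℝ) ⬝ᵥ (y : Fin n → ℝ)) := le_trans hlower hupper
    exact le_of_mul_le_mul_right (by simpa [mul_comm] using this) hq
  · -- lam i2 ≤ mu i
    set i2 : Fin N := ⟨N - n + i.val, by omega⟩ with hi2
    have hcard : N < (Finset.Ici i).card + (Finset.Iic i2).card := by
      rw [Fin.card_Ici, Fin.card_Iic]
      simp only [hi2]
      omega
    obtain ⟨y, x, hy0, hyU, hxW, hxy⟩ := exists_common C hC hu hw (Finset.Ici i)
      (Finset.Iic i2) hcard
    have hupper := rayleigh_span_le (C * A * Cᵀ) hu hueig (Finset.Ici i) (mu i)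
      (fun j hj => hmu_mono (Finset.mem_Ici.mp hj)) y hyU
    have hlower := rayleigh_span_le (-A) hw hnegweig (Finset.Iic i2) (-(lam i2))
      (fun j hj => neg_le_neg (hlam_mono (Finset.mem_Iic.mp hj))) x hxW
    rw [Matrix.neg_mulVec, dotProduct_neg, neg_le, ← neg_mul, neg_neg] at hlower
    have hq : (0:ℝ) < (y : Fin n → ℝ) ⬝ᵥ (y : Fin n → ℝ) := by
      rcases lt_or_eq_of_le (Finset.sum_nonneg fun k _ =>
        mul_self_nonneg ((y : Fin n → ℝ) k)) with h | h
      · exact h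
      · exact absurd (dotProduct_self_eq_zero.mp h.symm) (by simpa using hy0)
    have heq1 : (x : Fin N → ℝ) ⬝ᵥ (A *ᵥ (x : Fin N → ℝ)) =
        (y : Fin n → ℝ) ⬝ᵥ ((C * A * Cᵀ) *ᵥ (y : Fin n → ℝ)) := by
      rw [hxy]; exact bridge A y
    have heq2 : (x : Fin N → ℝ) ⬝ᵥ (x : Fin N → ℝ) = (y : Fin n → ℝ) ⬝ᵥ (y : Fin n → ℝ) := by
      rw [hxy]; exact bridge1 y
    rw [heq1, heq2] at hlower
    have : lam i2 * ((y : Fin n → ℝ) ⬝ᵥ (y : Fin n → ℝ)) ≤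
        mu i * ((y : Fin n → ℝ) ⬝ᵥ (y : Fin n → ℝ)) := le_trans hlower hupper
    exact le_of_mul_le_mul_right (by simpa [mul_comm] using this) hq
end

section
/- (Ruhe's trace inequality) If A and B are N×N real positive semidefinite matrices with eigenvalues λ_1 ≥ ... ≥ λ_N ≥ 0 and ν_1 ≥ ... ≥ ν_N ≥ 0 respectively, then Σ_{i=1}^N λ_i ν_{N−i+1} ≤ tr(AB) ≤ Σ_{i=1}^N λ_i ν_i. -/
open Matrix

private lemma ruhe_keyDS {N : ℕ} (S : Matrix (Fin N) (Fin N) ℝ)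
    (hS : S ∈ doublyStochastic ℝ (Fin N)) (a b : Fin N → ℝ)
    (ha : Antitone a) (hb : Antitone b) :
    (∑ i, a i * b i.rev) ≤ (∑ i, ∑ j, S i j * (a i * b j)) ∧
      (∑ i, ∑ j, S i j * (a i * b j)) ≤ ∑ i, a i * b i := by
  let f : Matrix (Fin N) (Fin N) ℝ →ₗ[ℝ] ℝ :=
    { toFun := fun M => ∑ i, ∑ j, M i j * (a i * b j)
      map_add' := by
        intro M M'; simp [add_mul, Finset.sum_add_distrib]
      map_smul' := by
        intro c M; simp [Finset.mul_sum, mul_assoc] }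
  have hperm : ∀ σ : Equiv.Perm (Fin N),
      f (σ.permMatrix ℝ) = ∑ i, a i * b (σ i) := by
    intro σ
    have : ∀ i, ∑ j, (σ.permMatrix ℝ) i j * (a i * b j) = a i * b (σ i) := by
      intro i
      rw [Finset.sum_eq_single (σ i)]
      · simp [Equiv.Perm.permMatrix, PEquiv.toMatrix_apply, Equiv.toPEquiv_apply]
      · intro j _ hj
        simp [Equiv.Perm.permMatrix, PEquiv.toMatrix_apply, Equiv.toPEquiv_apply, Ne.symm hj]
      · simp
    simp only [f, LinearMap.coe_mk, AddHom.coe_mk]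
    exact Finset.sum_congr rfl fun i _ => this i
  have hmono : Monovary a b := ha.monovary hb
  have hbrev : Monotone (fun i : Fin N => b i.rev) := by
    intro i j hij
    exact hb (Fin.rev_le_rev.mpr hij)
  have hanti : Antivary a (fun i : Fin N => b i.rev) := ha.antivary hbrev
  have key : ∀ σ : Equiv.Perm (Fin N),
      (∑ i, a i * b i.rev) ≤ ∑ i, a i * b (σ i) ∧
        (∑ i, a i * b (σ i)) ≤ ∑ i, a i * b i := by
    intro σ
    constructor
    · have := hanti.sum_smul_le_sum_smul_comp_perm (σ := σ.trans (Fin.revPerm))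
      simpa [Fin.rev_rev] using this
    · simpa using hmono.sum_smul_comp_perm_le_sum_smul (σ := σ)
  have hC : (doublyStochastic ℝ (Fin N) : Set (Matrix (Fin N) (Fin N) ℝ)) ⊆
      {M | (∑ i, a i * b i.rev) ≤ f M ∧ f M ≤ ∑ i, a i * b i} := by
    rw [doublyStochastic_eq_convexHull_permMatrix]
    apply convexHull_min
    · rintro x ⟨σ, rfl⟩
      rw [Set.mem_setOf_eq, hperm σ]
      exact key σ
    · exact (convex_halfSpace_ge f.isLinear _).inter (convex_halfSpace_le f.isLinear _)
  exact hC hS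

/-- Ruhe's trace inequality for PSD matrices. -/
theorem stmt2 {N : ℕ} (A B : Matrix (Fin N) (Fin N) ℝ)
    (hA : A.PosSemidef) (hB : B.PosSemidef)
    (lam nu : Fin N → ℝ) (hlam_mono : Antitone lam) (hnu_mono : Antitone nu)
    (hlam : ∃ σ : Equiv.Perm (Fin N), lam = hA.isHermitian.eigenvalues ∘ σ)
    (hnu : ∃ σ : Equiv.Perm (Fin N), nu = hB.isHermitian.eigenvalues ∘ σ) :
    ∑ i : Fin N, lam i * nu i.rev ≤ (A * B).trace ∧
      (A * B).trace ≤ ∑ i : Fin N, lam i * nu i := by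
  obtain ⟨σa, hσa⟩ := hlam
  obtain ⟨σb, hσb⟩ := hnu
  set U0 := Matrix.IsHermitian.eigenvectorUnitary hA.isHermitian with hU0
  set V0 := Matrix.IsHermitian.eigenvectorUnitary hB.isHermitian with hV0
  set U : Matrix (Fin N) (Fin N) ℝ := (U0 : Matrix (Fin N) (Fin N) ℝ)
  set V : Matrix (Fin N) (Fin N) ℝ := (V0 : Matrix (Fin N) (Fin N) ℝ)
  set W : Matrix (Fin N) (Fin N) ℝ := star U * V with hW
  set eA := hA.isHermitian.eigenvalues with heA
  set eB := hB.isHermitian.eigenvalues with heB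
  have hUU : U * star U = 1 := (Matrix.mem_unitaryGroup_iff).mp U0.2
  have hUU' : star U * U = 1 := (Matrix.mem_unitaryGroup_iff').mp U0.2
  have hVV : V * star V = 1 := (Matrix.mem_unitaryGroup_iff).mp V0.2
  have hVV' : star V * V = 1 := (Matrix.mem_unitaryGroup_iff').mp V0.2
  have hWW : W * star W = 1 := by
    rw [hW, Matrix.star_mul, star_star]
    calc star U * V * (star V * U) = star U * (V * star V) * U := by
          simp only [Matrix.mul_assoc]
      _ = 1 := by rw [hVV, Matrix.mul_one, hUU']
  have hWW' : star W * W = 1 := by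
    rw [hW, Matrix.star_mul, star_star]
    calc star V * U * (star U * V) = star V * (U * star U) * V := by
          simp only [Matrix.mul_assoc]
      _ = 1 := by rw [hUU, Matrix.mul_one, hVV']
  have hAe : A = U * diagonal eA * star U := by
    have := hA.isHermitian.spectral_theorem
    simpa using this
  have hBe : B = V * diagonal eB * star V := by
    have := hB.isHermitian.spectral_theorem
    simpa using this
  have hAB : A * B = U * (diagonal eA * (W * (diagonal eB * star W))) * star U := by
    rw [hAe, hBe, hW, Matrix.star_mul, star_star]
    simp only [Matrix.mul_assoc, hUU, Matrix.mul_one]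
  have htr : (A * B).trace = ∑ i, ∑ j, (W i j)^2 * (eA i * eB j) := by
    rw [hAB, Matrix.trace_mul_cycle, ← Matrix.mul_assoc, hUU', Matrix.one_mul]
    rw [Matrix.trace]
    refine Finset.sum_congr rfl fun i _ => ?_
    rw [Matrix.diag_apply, Matrix.diagonal_mul, Matrix.mul_apply, Finset.mul_sum]
    refine Finset.sum_congr rfl fun j _ => ?_
    rw [Matrix.diagonal_mul, Matrix.star_apply, star_trivial]
    ring
  -- the permuted doubly stochastic matrix
  set S : Matrix (Fin N) (Fin N) ℝ := fun i j => (W (σa i) (σb j))^2 with hS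
  have hSds : S ∈ doublyStochastic ℝ (Fin N) := by
    rw [mem_doublyStochastic_iff_sum]
    refine ⟨fun i j => sq_nonneg _, fun i => ?_, fun j => ?_⟩
    · have h1 : ∑ j, (W (σa i) j)^2 = 1 := by
        have := congrArg (fun M => M (σa i) (σa i)) hWW
        simpa [Matrix.mul_apply, Matrix.star_apply, pow_two] using this
      rw [← Equiv.sum_comp σb (fun j => (W (σa i) j)^2)] at h1
      exact h1
    · have h1 : ∑ i, (W i (σb j))^2 = 1 := by
        have := congrArg (fun M => M (σb j) (σb j)) hWW'
        simpa [Matrix.mul_apply, Matrix.star_apply, pow_two] using this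
      rw [← Equiv.sum_comp σa (fun i => (W i (σb j))^2)] at h1
      exact h1
  have htr2 : (A * B).trace = ∑ i, ∑ j, S i j * (lam i * nu j) := by
    rw [htr, ← Equiv.sum_comp σa (fun i => ∑ j, (W i j)^2 * (eA i * eB j))]
    refine Finset.sum_congr rfl fun i _ => ?_
    rw [← Equiv.sum_comp σb (fun j => (W (σa i) j)^2 * (eA (σa i) * eB j))]
    refine Finset.sum_congr rfl fun j _ => ?_
    simp [hS, hσa, hσb]
  rw [htr2]
  exact ruhe_keyDS S hSds lam nu hlam_mono hnu_mono
end
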